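/- arXiv:1302.1132 — 2 statements merged into one kernel-verified Lean document; each statement's English description precedes it below -/
import Mathlib

section
/- For c ≥ 2 and τ > 0, the second derivative of ρ(x) = τ·c·f(e^{-x} - 1) is given by ρ''(x) = cτ·e^{-x}·(f'(w(x)))³·(c² - 4 + 2e^{-x}), and hence ρ''(x) > 0 for all real x, so ρ is strictly convex on ℝ. -/
noncomputable def f (c x : ℝ) : ℝ := (-c + Real.sqrt (c^2 + 4*x)) / 2
noncomputable def w (x : ℝ) : ℝ := Real.exp (-x) - 1
noncomputable def ρ (c τ x : ℝ) : ℝ := τ * c * f c (w x)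

theorem stmt3 (c τ : ℝ) (hc : 2 ≤ c) (hτ : 0 < τ) :
    (∀ x : ℝ, deriv (deriv (ρ c τ)) x =
      c * τ * Real.exp (-x) * (deriv (f c) (w x))^3 * (c^2 - 4 + 2 * Real.exp (-x))) ∧
    (∀ x : ℝ, 0 < deriv (deriv (ρ c τ)) x) ∧
    StrictConvexOn ℝ Set.univ (ρ c τ) := by
  have hc0 : (0:ℝ) < c := by linarith
  have hc2 : (4:ℝ) ≤ c^2 := by nlinarith
  set g : ℝ → ℝ := fun x => Real.sqrt (c^2 - 4 + 4*Real.exp (-x)) with hgdef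
  have hApos : ∀ x : ℝ, 0 < c^2 - 4 + 4*Real.exp (-x) := by
    intro x; nlinarith [Real.exp_pos (-x)]
  have hgpos : ∀ x, 0 < g x := fun x => Real.sqrt_pos.mpr (hApos x)
  have hgsq : ∀ x, g x ^ 2 = c^2 - 4 + 4*Real.exp (-x) := fun x => Real.sq_sqrt (hApos x).le
  -- derivative of g
  have hAd : ∀ x : ℝ, HasDerivAt (fun y => c^2 - 4 + 4*Real.exp (-y)) (-(4*Real.exp (-x))) x := by
    intro x
    have h1 : HasDerivAt (fun y : ℝ => Real.exp (-y)) (-Real.exp (-x)) x := by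
      simpa [Function.comp_def] using (Real.hasDerivAt_exp (-x)).comp x (hasDerivAt_neg x)
    have := (h1.const_mul 4).const_add (c^2 - 4)
    exact this.congr_deriv (by ring)
  have hgd : ∀ x : ℝ, HasDerivAt g (-(2*Real.exp (-x)) / g x) x := by
    intro x
    have hs := (Real.hasDerivAt_sqrt (ne_of_gt (hApos x))).comp x (hAd x)
    refine hs.congr_deriv (Eq.symm ?_)
    have := (hgpos x).ne'
    change _ = 1 / (2 * g x) * _
    field_simp
    ring
  -- ρ rewritten via g
  have hρeq : ρ c τ = fun x => τ * c * ((-c + g x) / 2) := by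
    funext x
    have harg : c^2 + 4*(Real.exp (-x) - 1) = c^2 - 4 + 4*Real.exp (-x) := by ring
    simp only [ρ, f, w, hgdef, harg]
  -- first derivative
  have hρd : ∀ x : ℝ, HasDerivAt (ρ c τ) (-(τ*c*Real.exp (-x)) / g x) x := by
    intro x
    rw [hρeq]
    have := (((hgd x).const_add (-c)).div_const 2).const_mul (τ*c)
    refine this.congr_deriv (Eq.symm ?_)
    have := (hgpos x).ne'
    field_simp
  have hD1 : deriv (ρ c τ) = fun x => -(τ*c*Real.exp (-x)) / g x := by
    funext x; exact (hρd x).deriv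
  -- second derivative
  have hnd : ∀ x : ℝ, HasDerivAt (fun y => -(τ*c*Real.exp (-y))) (τ*c*Real.exp (-x)) x := by
    intro x
    have h1 : HasDerivAt (fun y : ℝ => Real.exp (-y)) (-Real.exp (-x)) x := by
      simpa [Function.comp_def] using (Real.hasDerivAt_exp (-x)).comp x (hasDerivAt_neg x)
    have := (h1.const_mul (τ*c)).neg
    exact this.congr_deriv (by ring)
  have hρdd : ∀ x : ℝ, HasDerivAt (deriv (ρ c τ))
      (c * τ * Real.exp (-x) * (1 / g x)^3 * (c^2 - 4 + 2 * Real.exp (-x))) x := by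
    intro x
    rw [hD1]
    have := (hnd x).div (hgd x) (hgpos x).ne'
    refine this.congr_deriv (Eq.symm ?_)
    have hne := (hgpos x).ne'
    have h2 := hgsq x
    field_simp
    linear_combination (-1 : ℝ) * h2
  -- deriv of f at w x
  have hfd : ∀ x : ℝ, deriv (f c) (w x) = 1 / g x := by
    intro x
    have harg : c^2 + 4*(w x) = c^2 - 4 + 4*Real.exp (-x) := by simp [w]; ring
    have hin : HasDerivAt (fun y : ℝ => c^2 + 4*y) 4 (w x) := by
      simpa using ((hasDerivAt_id (w x)).const_mul (4:ℝ)).const_add (c^2)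
    have hs := (Real.hasDerivAt_sqrt (x := c^2 + 4*(w x)) (by rw [harg]; exact (hApos x).ne')).comp (w x) hin
    have hf : HasDerivAt (f c) (1 / (2 * Real.sqrt (c^2 + 4*(w x))) * 4 / 2) (w x) := by
      have h := (hs.const_add (-c)).div_const 2
      exact h
    rw [hf.deriv, harg]
    have hne := (hgpos x).ne'
    rw [hgdef]
    field_simp
    ring
  have hmain : ∀ x : ℝ, deriv (deriv (ρ c τ)) x =
      c * τ * Real.exp (-x) * (deriv (f c) (w x))^3 * (c^2 - 4 + 2 * Real.exp (-x)) := by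
    intro x
    rw [(hρdd x).deriv, hfd x]
  have hpos : ∀ x : ℝ, 0 < deriv (deriv (ρ c τ)) x := by
    intro x
    rw [hmain x, hfd x]
    have h1 : 0 < c^2 - 4 + 2 * Real.exp (-x) := by nlinarith [Real.exp_pos (-x)]
    have h2 : 0 < (1 / g x)^3 := pow_pos (one_div_pos.mpr (hgpos x)) 3
    exact mul_pos (mul_pos (mul_pos (mul_pos hc0 hτ) (Real.exp_pos _)) h2) h1
  refine ⟨hmain, hpos, ?_⟩
  apply strictConvexOn_of_deriv2_pos convex_univ
  · have hgc : Continuous g :=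
      Real.continuous_sqrt.comp
        (continuous_const.add (continuous_const.mul (Real.continuous_exp.comp continuous_neg)))
    have : Continuous (ρ c τ) := by
      rw [hρeq]
      exact continuous_const.mul ((continuous_const.add hgc).div_const 2)
    exact this.continuousOn
  · intro x _
    have : deriv^[2] (ρ c τ) x = deriv (deriv (ρ c τ)) x := by
      simp [Function.iterate_succ, Function.iterate_zero, Function.comp]
    rw [this]
    exact hpos x
end

section
/- For c ≥ 2 and τ > 0, the Schwarzian derivative of ρ(x) = τ·c·f(e^{-x} - 1) is negative everywhere on ℝ: (Sρ)(x) = ρ'''(x)/ρ'(x) - (3/2)(ρ''(x)/ρ'(x))² < 0 for all real x. -/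
/-- Schwarzian derivative -/
noncomputable def S (g : ℝ → ℝ) (x : ℝ) : ℝ :=
  deriv (deriv (deriv g)) x / deriv g x - 3/2 * (deriv (deriv g) x / deriv g x)^2

lemma dexp (x : ℝ) : HasDerivAt (fun y : ℝ => Real.exp (-y)) (-Real.exp (-x)) x := by
  simpa using (hasDerivAt_neg x).exp

lemma du (a x : ℝ) : HasDerivAt (fun y => a + 4 * Real.exp (-y)) (-4 * Real.exp (-x)) x := by
  have h := ((dexp x).const_mul 4).const_add a
  refine h.congr_deriv ?_; ring

lemma d1 (a : ℝ) (ha : 0 ≤ a) (x : ℝ) :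
    HasDerivAt (fun y => Real.sqrt (a + 4 * Real.exp (-y)))
      (-2 * Real.exp (-x) / Real.sqrt (a + 4 * Real.exp (-x))) x := by
  have hu : (0:ℝ) < a + 4 * Real.exp (-x) := by positivity
  have h := (du a x).sqrt hu.ne'
  convert h using 1
  rw [div_eq_div_iff (by positivity) (by positivity)]; ring

lemma d2 (a : ℝ) (ha : 0 ≤ a) (x : ℝ) :
    HasDerivAt (fun y => -2 * Real.exp (-y) / Real.sqrt (a + 4 * Real.exp (-y)))
      ((2 * Real.exp (-x) * (a + 4 * Real.exp (-x)) - 4 * Real.exp (-x)^2) /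
        ((a + 4 * Real.exp (-x)) * Real.sqrt (a + 4 * Real.exp (-x)))) x := by
  have hu : (0:ℝ) < a + 4 * Real.exp (-x) := by positivity
  have hs : (0:ℝ) < Real.sqrt (a + 4 * Real.exp (-x)) := Real.sqrt_pos.mpr hu
  have hsq : Real.sqrt (a + 4 * Real.exp (-x)) * Real.sqrt (a + 4 * Real.exp (-x))
      = a + 4 * Real.exp (-x) := Real.mul_self_sqrt hu.le
  have hn : HasDerivAt (fun y : ℝ => -2 * Real.exp (-y)) (2 * Real.exp (-x)) x := by
    have := (dexp x).const_mul (-2)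
    refine this.congr_deriv ?_; ring
  have h := hn.div (d1 a ha x) hs.ne'
  refine h.congr_deriv ?_
  set s := Real.sqrt (a + 4 * Real.exp (-x))
  set E := Real.exp (-x)
  rw [div_eq_div_iff (by positivity) (by positivity)]
  field_simp
  linear_combination (4*E^2) * hsq

lemma d3 (a : ℝ) (ha : 0 ≤ a) (x : ℝ) :
    HasDerivAt (fun y => (2 * Real.exp (-y) * (a + 4 * Real.exp (-y)) - 4 * Real.exp (-y)^2) /
        ((a + 4 * Real.exp (-y)) * Real.sqrt (a + 4 * Real.exp (-y))))
      ((-2 * Real.exp (-x) * (a + 4 * Real.exp (-x))^2 + 12 * Real.exp (-x)^2 * (a + 4 * Real.exp (-x))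
          - 24 * Real.exp (-x)^3) /
        ((a + 4 * Real.exp (-x))^2 * Real.sqrt (a + 4 * Real.exp (-x)))) x := by
  have hu : (0:ℝ) < a + 4 * Real.exp (-x) := by positivity
  have hs : (0:ℝ) < Real.sqrt (a + 4 * Real.exp (-x)) := Real.sqrt_pos.mpr hu
  have hsq : Real.sqrt (a + 4 * Real.exp (-x)) * Real.sqrt (a + 4 * Real.exp (-x))
      = a + 4 * Real.exp (-x) := Real.mul_self_sqrt hu.le
  have hn : HasDerivAt (fun y : ℝ => 2 * Real.exp (-y) * (a + 4 * Real.exp (-y)) - 4 * Real.exp (-y)^2)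
      (-2 * Real.exp (-x) * (a + 4 * Real.exp (-x))) x := by
    have h1 := ((dexp x).const_mul 2).mul (du a x)
    have h2 := ((dexp x).pow 2).const_mul 4
    have := h1.sub h2
    refine this.congr_deriv ?_; ring
  have hd : HasDerivAt (fun y => (a + 4 * Real.exp (-y)) * Real.sqrt (a + 4 * Real.exp (-y)))
      (-6 * Real.exp (-x) * Real.sqrt (a + 4 * Real.exp (-x))) x := by
    have := (du a x).mul (d1 a ha x)
    refine this.congr_deriv ?_
    field_simp
    linear_combination (2:ℝ) * hsq
  have h := hn.div hd (by positivity)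
  refine h.congr_deriv ?_
  set s := Real.sqrt (a + 4 * Real.exp (-x))
  set E := Real.exp (-x)
  rw [div_eq_div_iff (by positivity) (by positivity)]
  field_simp
  linear_combination (0:ℝ) * hsq

theorem stmt4 (c τ : ℝ) (hc : 2 ≤ c) (hτ : 0 < τ) :
    ∀ x : ℝ, S (ρ c τ) x < 0 := by
  intro x
  set a : ℝ := c^2 - 4 with ha_def
  have ha : 0 ≤ a := by nlinarith
  have hK : τ * c / 2 ≠ 0 := by positivity
  have hρ : ρ c τ = fun y => τ * c / 2 * Real.sqrt (a + 4 * Real.exp (-y)) + (-(τ * c^2 / 2)) := by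
    funext y
    have h : c^2 + 4 * (Real.exp (-y) - 1) = a + 4 * Real.exp (-y) := by rw [ha_def]; ring
    simp only [ρ, f, w, h]
    ring
  have hD1 : deriv (ρ c τ) = fun y =>
      τ * c / 2 * (-2 * Real.exp (-y) / Real.sqrt (a + 4 * Real.exp (-y))) := by
    funext y
    rw [hρ]
    exact (((d1 a ha y).const_mul (τ * c / 2)).add_const _).deriv
  have hD2 : deriv (deriv (ρ c τ)) = fun y =>
      τ * c / 2 * ((2 * Real.exp (-y) * (a + 4 * Real.exp (-y)) - 4 * Real.exp (-y)^2) /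
        ((a + 4 * Real.exp (-y)) * Real.sqrt (a + 4 * Real.exp (-y)))) := by
    funext y
    rw [hD1]
    exact ((d2 a ha y).const_mul (τ * c / 2)).deriv
  have hD3 : deriv (deriv (deriv (ρ c τ))) x =
      τ * c / 2 * ((-2 * Real.exp (-x) * (a + 4 * Real.exp (-x))^2
          + 12 * Real.exp (-x)^2 * (a + 4 * Real.exp (-x)) - 24 * Real.exp (-x)^3) /
        ((a + 4 * Real.exp (-x))^2 * Real.sqrt (a + 4 * Real.exp (-x)))) := by
    rw [hD2]
    exact ((d3 a ha x).const_mul (τ * c / 2)).deriv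
  have hu : (0:ℝ) < a + 4 * Real.exp (-x) := by positivity
  have hs : (0:ℝ) < Real.sqrt (a + 4 * Real.exp (-x)) := Real.sqrt_pos.mpr hu
  have hsq : Real.sqrt (a + 4 * Real.exp (-x)) * Real.sqrt (a + 4 * Real.exp (-x))
      = a + 4 * Real.exp (-x) := Real.mul_self_sqrt hu.le
  have hE : (0:ℝ) < Real.exp (-x) := Real.exp_pos _
  rw [S, hD3, hD2, hD1]
  simp only
  set E := Real.exp (-x)
  set s := Real.sqrt (a + 4 * E)
  set u : ℝ := a + 4 * E with hu_def
  rw [mul_div_mul_left _ _ hK, mul_div_mul_left _ _ hK]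
  have key : (-2 * E * u^2 + 12 * E^2 * u - 24 * E^3) / (u^2 * s) / (-2 * E / s)
      - 3/2 * ((2 * E * u - 4 * E^2) / (u * s) / (-2 * E / s))^2
      = (6 * E^2 - u^2 / 2) / u^2 := by
    field_simp
    ring
  rw [key]
  apply div_neg_of_neg_of_pos _ (by positivity)
  have h4 : 4 * E ≤ u := by rw [hu_def]; linarith
  nlinarith [h4, hE]
end
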